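/- arXiv:math/0610050 — 6 statements merged into one kernel-verified Lean document; each statement's English description precedes it below -/
import Mathlib

section
/- Let $R$ be a commutative ring and let $P, Q \in R[x]$ have degree at most $d$ and $d'$ respectively, with $d, d' \ge 1$. Then there exist polynomials $A, B \in R[x]$ with $\deg A \le d' - 1$ and $\deg B \le d - 1$ such that $\mathrm{Res}_{d,d'}(P,Q) = A P + B Q$ (where the resultant, an element of $R$, is identified with a constant polynomial). -/
/-- The Sylvester matrix of two polynomials `P, Q` viewed as having degrees at most
`d, d'` respectively: its rows are the coefficient vectors of
`P, X·P, …, X^(d'-1)·P, Q, X·Q, …, X^(d-1)·Q` in the basis `1, X, …, X^(d+d'-1)`. -/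
noncomputable def sylvesterMatrix {R : Type*} [CommRing R] (d d' : ℕ)
    (P Q : Polynomial R) : Matrix (Fin (d' + d)) (Fin (d' + d)) R :=
  fun i j =>
    if (i : ℕ) < d' then (Polynomial.X ^ (i : ℕ) * P).coeff (j : ℕ)
    else (Polynomial.X ^ ((i : ℕ) - d') * Q).coeff (j : ℕ)

/-- The resultant `Res_{d,d'}(P,Q)`: the determinant of the Sylvester matrix. -/
noncomputable def resultant {R : Type*} [CommRing R] (d d' : ℕ) (P Q : Polynomial R) : R :=
  (sylvesterMatrix d d' P Q).det

open Polynomial Matrix Finset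

/-- The resultant is an `R[X]`-linear combination `A·P + B·Q` with
`deg A ≤ d' - 1` and `deg B ≤ d - 1`. -/
theorem stmt_5 {R : Type*} [CommRing R] (d d' : ℕ) (hd : 1 ≤ d) (hd' : 1 ≤ d')
    (P Q : Polynomial R) (hP : P.natDegree ≤ d) (hQ : Q.natDegree ≤ d') :
    ∃ A B : Polynomial R, A.natDegree ≤ d' - 1 ∧ B.natDegree ≤ d - 1 ∧
      Polynomial.C (resultant d d' P Q) = A * P + B * Q := by
  set S := sylvesterMatrix d d' P Q with hS
  set N : Matrix (Fin (d' + d)) (Fin (d' + d)) R[X] := S.map Polynomial.C with hN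
  have hpos : 0 < d' + d := by omega
  set z : Fin (d' + d) := ⟨0, hpos⟩ with hz
  -- the vector of powers
  set v : Fin (d' + d) → R[X] := fun j => X ^ (j : ℕ) with hv
  set w : Fin (d' + d) → R[X] := fun i =>
    if (i : ℕ) < d' then X ^ (i : ℕ) * P else X ^ ((i : ℕ) - d') * Q with hw
  have key : N.mulVec v = w := by
    funext i
    have expand : ∀ p : R[X], p.natDegree < d' + d →
        ∑ j : Fin (d' + d), Polynomial.C (p.coeff (j : ℕ)) * X ^ (j : ℕ) = p := by
      intro p hp
      rw [Fin.sum_univ_eq_sum_range (fun j => Polynomial.C (p.coeff j) * X ^ j)]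
      simp_rw [C_mul_X_pow_eq_monomial]
      exact (p.as_sum_range' _ hp).symm
    simp only [mulVec, dotProduct, hN, hS, Matrix.map_apply, sylvesterMatrix, hw, hv]
    by_cases hi : (i : ℕ) < d'
    · simp only [hi, if_true]
      refine expand _ ?_
      calc (X ^ (i:ℕ) * P).natDegree ≤ (X ^ (i:ℕ)).natDegree + P.natDegree := natDegree_mul_le
        _ ≤ i + d := add_le_add (natDegree_X_pow_le _) hP
        _ < d' + d := by omega
    · simp only [hi, if_false]
      refine expand _ ?_
      have : (i : ℕ) < d' + d := i.isLt
      calc (X ^ ((i:ℕ)-d') * Q).natDegree ≤ (X ^ ((i:ℕ)-d')).natDegree + Q.natDegree :=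
            natDegree_mul_le
        _ ≤ ((i:ℕ) - d') + d' := add_le_add (natDegree_X_pow_le _) hQ
        _ < d' + d := by omega
  have cram : N.adjugate.mulVec w = N.det • v := by
    rw [← key, Matrix.mulVec_mulVec, Matrix.adjugate_mul, Matrix.smul_mulVec,
      Matrix.one_mulVec]
  have hdet : N.det = Polynomial.C (resultant d d' P Q) :=
    ((Polynomial.C : R →+* R[X]).map_det S).symm
  have hadj : N.adjugate = (S.adjugate).map Polynomial.C :=
    ((Polynomial.C : R →+* R[X]).map_adjugate S).symm
  have main : Polynomial.C (resultant d d' P Q) =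
      ∑ i : Fin (d' + d), Polynomial.C (S.adjugate z i) * w i := by
    have := congrFun cram z
    simp only [mulVec, dotProduct, hadj, hdet, Matrix.map_apply, Pi.smul_apply, hv, hz,
      smul_eq_mul, pow_zero, mul_one] at this
    exact this.symm
  refine ⟨∑ i ∈ univ.filter (fun i : Fin (d' + d) => (i : ℕ) < d'),
            Polynomial.C (S.adjugate z i) * X ^ (i : ℕ),
          ∑ i ∈ univ.filter (fun i : Fin (d' + d) => ¬ (i : ℕ) < d'),
            Polynomial.C (S.adjugate z i) * X ^ ((i : ℕ) - d'), ?_, ?_, ?_⟩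
  · refine natDegree_sum_le_of_forall_le _ _ fun i hi => ?_
    simp only [mem_filter] at hi
    calc _ ≤ (Polynomial.C (S.adjugate z i)).natDegree + (X ^ (i:ℕ)).natDegree :=
          natDegree_mul_le
      _ ≤ 0 + (i:ℕ) := add_le_add (natDegree_C _).le (natDegree_X_pow_le _)
      _ ≤ d' - 1 := by omega
  · refine natDegree_sum_le_of_forall_le _ _ fun i hi => ?_
    simp only [mem_filter] at hi
    have : (i : ℕ) < d' + d := i.isLt
    calc _ ≤ (Polynomial.C (S.adjugate z i)).natDegree + (X ^ ((i:ℕ)-d')).natDegree :=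
          natDegree_mul_le
      _ ≤ 0 + ((i:ℕ)-d') := add_le_add (natDegree_C _).le (natDegree_X_pow_le _)
      _ ≤ d - 1 := by omega
  · rw [main, ← Finset.sum_filter_add_sum_filter_not univ (fun i : Fin (d' + d) => (i : ℕ) < d'),
      Finset.sum_mul, Finset.sum_mul]
    congr 1
    · refine Finset.sum_congr rfl fun i hi => ?_
      simp only [mem_filter] at hi
      rw [hw]; simp only [hi.2, if_true]; ring
    · refine Finset.sum_congr rfl fun i hi => ?_
      simp only [mem_filter] at hi
      rw [hw]; simp only [hi.2, if_false]; ring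
end

section
/- (Gauss bound for neighborhoods of convex boundaries.) Let $\Omega \subset \mathbb{R}^D$ be an open bounded convex set containing a ball of radius $r(\Omega)$ (the inradius). Then for any $0 < r < r(\Omega)$, the Lebesgue measure of the $r$-neighborhood of the boundary $\partial\Omega$ satisfies $\mathrm{mes}(\mathcal{N}_r(\partial\Omega)) = O_D\big(\frac{r}{r(\Omega)}\big) \, \mathrm{mes}(\Omega)$, i.e. there is a constant $C_D$ depending only on $D$ with $\mathrm{mes}(\mathcal{N}_r(\partial\Omega)) \le C_D \frac{r}{r(\Omega)} \mathrm{mes}(\Omega)$. -/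
/-!
Let `x` be the centre of a ball of radius `ρ` inside `Ω` and put `t = r / ρ`. By convexity, the
`r`-neighbourhood of `Ω` lies in the image of `closure Ω` under the homothety of ratio `1 + t`
about `x`, while every point of the image of `Ω` under the homothety of ratio `1 - t` is the centre
of a ball of radius larger than `r` inside `Ω`, so it lies at distance more than `r` from `∂Ω`.
Hence `mes (𝒩_r(∂Ω)) ≤ ((1 + t) ^ D - (1 - t) ^ D) mes Ω`, and the factor is `O_D(t)`.
-/

open MeasureTheory Metric Set AffineMap Module
open scoped Pointwise

lemma one_add_pow_sub_one_sub_pow_le (n : ℕ) {t : ℝ} (ht₀ : 0 ≤ t) (ht₁ : t ≤ 1) :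
    (1 + t) ^ n - (1 - t) ^ n ≤ n * 2 ^ (n + 1) * t := by
  have hmax : max |1 + t| |1 - t| ≤ 2 := by
    rw [abs_of_nonneg (by linarith), abs_of_nonneg (by linarith)]
    exact max_le (by linarith) (by linarith)
  calc (1 + t) ^ n - (1 - t) ^ n ≤ |(1 + t) ^ n - (1 - t) ^ n| := le_abs_self _
    _ ≤ |(1 + t) - (1 - t)| * n * max |1 + t| |1 - t| ^ (n - 1) := abs_pow_sub_pow_le ..
    _ ≤ (2 * t) * n * 2 ^ n := by
        rw [show (1 + t) - (1 - t) = 2 * t by ring, abs_of_nonneg (by linarith)]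
        gcongr
        exact (pow_le_pow_left₀ (by positivity) hmax _).trans
          (pow_le_pow_right₀ one_le_two (Nat.sub_le n 1))
    _ = n * 2 ^ (n + 1) * t := by ring

lemma IsOpen.notMem_cthickening_frontier {X : Type*} [PseudoMetricSpace X] {s : Set X}
    (hs : IsOpen s) {z : X} {r R : ℝ} (hR : 0 < R) (hrR : r < R) (hz : ball z R ⊆ s) :
    z ∉ cthickening r (frontier s) := by
  intro hzr
  obtain ⟨p, hp, hzp⟩ := mem_thickening_iff.1 (cthickening_subset_thickening' hR hrR _ hzr)
  rw [hs.frontier_eq] at hp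
  exact hp.2 (hz (mem_ball'.2 hzp))

section Homothety

variable {E : Type*} [NormedAddCommGroup E] [NormedSpace ℝ E] {s : Set E} {x : E} {ρ t : ℝ}

lemma Convex.ball_homothety_subset (hs : Convex ℝ s) (hxs : ball x ρ ⊆ s) {y : E} {ε : ℝ}
    (hys : ball y ε ⊆ s) (hρ : 0 < ρ) (hε : 0 < ε) (ht₀ : 0 < t) (ht₁ : t < 1) :
    ball (homothety x (1 - t) y) (t * ρ + (1 - t) * ε) ⊆ s := by
  have h1t : 0 < 1 - t := sub_pos.2 ht₁
  calc ball (homothety x (1 - t) y) (t * ρ + (1 - t) * ε)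
        = t • ball x ρ + (1 - t) • ball y ε := by
          rw [_root_.smul_ball ht₀.ne', _root_.smul_ball h1t.ne', Real.norm_of_nonneg ht₀.le,
            Real.norm_of_nonneg h1t.le, ball_add_ball (mul_pos ht₀ hρ) (mul_pos h1t hε),
            homothety_apply, vsub_eq_sub, vadd_eq_add]
          congr 1
          module
    _ ⊆ t • s + (1 - t) • s := add_subset_add (smul_set_mono hxs) (smul_set_mono hys)
    _ ⊆ s := convex_iff_pointwise_add_subset.1 hs ht₀.le h1t.le (by ring)

lemma Convex.disjoint_image_homothety_cthickening_frontier (hs : Convex ℝ s) (hso : IsOpen s)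
    (hxs : ball x ρ ⊆ s) (hρ : 0 < ρ) (ht₀ : 0 < t) (ht₁ : t < 1) :
    Disjoint (homothety x (1 - t) '' s) (Metric.cthickening (t * ρ) (frontier s)) := by
  refine Set.disjoint_left.2 ?_
  rintro _ ⟨y, hy, rfl⟩
  obtain ⟨ε, hε, hys⟩ := isOpen_iff.1 hso y hy
  have h1t : 0 < 1 - t := sub_pos.2 ht₁
  exact hso.notMem_cthickening_frontier (by positivity)
    (lt_add_of_pos_right _ (by positivity)) (hs.ball_homothety_subset hxs hys hρ hε ht₀ ht₁)

lemma Convex.cthickening_subset_image_homothety [ProperSpace E] (hs : Convex ℝ s)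
    (hxs : ball x ρ ⊆ s) (hρ : 0 < ρ) (ht : 0 < t) :
    Metric.cthickening (t * ρ) s ⊆ homothety x (1 + t) '' closure s := by
  intro z hz
  rw [cthickening_eq_biUnion_closedBall _ (by positivity)] at hz
  obtain ⟨a, ha, hza⟩ := mem_iUnion₂.1 hz
  have hp : x + t⁻¹ • (z - a) ∈ closure s := by
    refine (closure_ball x hρ.ne').symm.subset.trans (closure_mono hxs) ?_
    rw [mem_closedBall, dist_eq_norm, add_sub_cancel_left, norm_smul, Real.norm_of_nonneg
      (inv_nonneg.2 ht.le), ← dist_eq_norm, inv_mul_le_iff₀ ht]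
    exact hza
  refine ⟨(1 + t)⁻¹ • a + (t / (1 + t)) • (x + t⁻¹ • (z - a)),
    hs.closure ha hp (by positivity) (by positivity) (by field_simp), ?_⟩
  rw [homothety_apply, vsub_eq_sub, vadd_eq_add]
  match_scalars <;> field_simp <;> ring

end Homothety

section Measure

variable {E : Type*} [NormedAddCommGroup E] [NormedSpace ℝ E] [MeasurableSpace E]
  [BorelSpace E] [FiniteDimensional ℝ E] (μ : Measure E) [μ.IsAddHaarMeasure] {s : Set E}

lemma Convex.addHaar_closure (hs : Convex ℝ s) : μ (closure s) = μ s := by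
  refine le_antisymm ?_ (measure_mono subset_closure)
  calc μ (closure s) ≤ μ s + μ (frontier s) := by
        rw [closure_eq_self_union_frontier]; exact measure_union_le _ _
    _ = μ s := by rw [hs.addHaar_frontier μ, add_zero]

theorem Convex.addHaar_cthickening_frontier_le (hs : Convex ℝ s) (hso : IsOpen s)
    (hfin : μ s ≠ ⊤) {x : E} {ρ t : ℝ} (hxs : ball x ρ ⊆ s) (hρ : 0 < ρ) (ht₀ : 0 < t)
    (ht₁ : t < 1) :
    μ (Metric.cthickening (t * ρ) (frontier s)) ≤
      ENNReal.ofReal ((1 + t) ^ finrank ℝ E - (1 - t) ^ finrank ℝ E) * μ s := by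
  set inner := homothety x (1 - t) '' s
  set outer := homothety x (1 + t) '' closure s
  have h1t : 0 ≤ 1 - t := by linarith
  have hinner : μ inner = ENNReal.ofReal ((1 - t) ^ finrank ℝ E) * μ s := by
    rw [Measure.addHaar_image_homothety, abs_of_nonneg (pow_nonneg h1t _)]
  have houter : μ outer = ENNReal.ofReal ((1 + t) ^ finrank ℝ E) * μ s := by
    rw [Measure.addHaar_image_homothety, hs.addHaar_closure μ, abs_of_nonneg (by positivity)]
  have hthick : Metric.cthickening (t * ρ) s ⊆ outer :=
    hs.cthickening_subset_image_homothety hxs hρ ht₀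
  have hinner_sub : inner ⊆ outer := by
    rintro _ ⟨y, hy, rfl⟩
    rw [homothety_eq_lineMap]
    exact hthick (self_subset_cthickening s
      (hs.lineMap_mem (hxs (mem_ball_self hρ)) hy ⟨h1t, by linarith⟩))
  have hfrontier_sub : Metric.cthickening (t * ρ) (frontier s) ⊆ outer :=
    (cthickening_subset_of_subset _ frontier_subset_closure).trans
      (cthickening_closure.subset.trans hthick)
  have hadd : μ inner + μ (Metric.cthickening (t * ρ) (frontier s)) ≤ μ outer := by
    rw [← measure_union (hs.disjoint_image_homothety_cthickening_frontier hso hxs hρ ht₀ ht₁)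
      isClosed_cthickening.measurableSet]
    exact measure_mono (union_subset hinner_sub hfrontier_sub)
  calc μ (Metric.cthickening (t * ρ) (frontier s)) ≤ μ outer - μ inner :=
        ENNReal.le_sub_of_add_le_left
          (by rw [hinner]; exact ENNReal.mul_ne_top ENNReal.ofReal_ne_top hfin) hadd
    _ = _ := by
        rw [houter, hinner, ← ENNReal.sub_mul (fun _ _ ↦ hfin),
          ← ENNReal.ofReal_sub _ (pow_nonneg h1t _)]

end Measure

/-- Gauss bound for neighborhoods of convex boundaries: if `Ω ⊂ ℝ^D` is a convex body
containing a ball of radius `ρ` (so its inradius is at least `ρ`), then for any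
`0 < r < ρ` the `r`-neighborhood of `∂Ω` has measure at most `C_D · (r/ρ) · mes(Ω)`. -/
theorem stmt_8 (D : ℕ) :
    ∃ C : ℝ, 0 < C ∧
      ∀ (Ω : Set (EuclideanSpace ℝ (Fin D))) (ρ r : ℝ),
        IsOpen Ω → Bornology.IsBounded Ω → Convex ℝ Ω →
        (∃ x, ball x ρ ⊆ Ω) → 0 < r → r < ρ →
        volume (cthickening r (frontier Ω)) ≤ ENNReal.ofReal (C * (r / ρ)) * volume Ω := by
  refine ⟨(D + 1) * 2 ^ (D + 1), by positivity, ?_⟩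
  rintro Ω ρ r hΩo hΩb hΩc ⟨x, hx⟩ hr hrρ
  have hρ : 0 < ρ := hr.trans hrρ
  have ht₀ : 0 < r / ρ := div_pos hr hρ
  have ht₁ : r / ρ < 1 := (div_lt_one hρ).2 hrρ
  have hbound :=
    hΩc.addHaar_cthickening_frontier_le volume hΩo hΩb.measure_lt_top.ne hx hρ ht₀ ht₁
  rw [div_mul_cancel₀ r hρ.ne', finrank_euclideanSpace_fin] at hbound
  refine hbound.trans (mul_le_mul_left (ENNReal.ofReal_le_ofReal ?_) _)
  calc (1 + r / ρ) ^ D - (1 - r / ρ) ^ D ≤ D * 2 ^ (D + 1) * (r / ρ) :=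
        one_add_pow_sub_one_sub_pow_le D ht₀.le ht₁.le
    _ ≤ (D + 1) * 2 ^ (D + 1) * (r / ρ) := by gcongr; linarith
end

section
/- (Lattice point count in a convex body.) Let $\Omega \subset \mathbb{R}^D$ be an open bounded convex set of inradius $r(\Omega)$, let $0 < m \le r(\Omega)$, and let $a \in \mathbb{R}^D$. Then $\#(\Omega \cap (m\mathbb{Z}^D + a)) = \big(1 + O_D(\tfrac{m}{r(\Omega)})\big) m^{-D} \, \mathrm{mes}(\Omega)$, i.e. the count equals $m^{-D}\mathrm{mes}(\Omega)$ up to a multiplicative error of the form $1 + C_D \tfrac{m}{r(\Omega)}$ with $C_D$ depending only on $D$. -/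
open MeasureTheory Metric Set Pointwise

/-! Attach to every point `p` of the shifted lattice the half-open cube `p + [0, m)^D`. These cubes
tile space, so the cubes at the `N` lattice points of `Ω` form a set of volume `N m^D`. A cube has
diameter `√D m`; with `t = √D m / ρ` and `ball x₀ ρ ⊆ Ω`, convexity puts their union inside the
`(1 + t)`-dilate of `closure Ω` about `x₀` and puts the `(1 - t)`-dilate of `Ω` inside their union.
The frontier of a convex set is null, so `(1 - t)^D mes Ω ≤ N m^D ≤ (1 + t)^D mes Ω`, and both
factors are `1 + O_D(t)`. -/

lemma abs_pow_sub_one_le {s t : ℝ} (hs : |s - 1| ≤ t) (n : ℕ) :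
    |s ^ n - 1| ≤ n * t * (1 + t) ^ n := by
  have ht : 0 ≤ t := (abs_nonneg _).trans hs
  have hmax : max |s| |1| ≤ 1 + t := by
    have := abs_sub_abs_le_abs_sub s 1
    rw [abs_one] at this ⊢
    exact max_le (by linarith) (by linarith)
  calc |s ^ n - 1| = |s ^ n - 1 ^ n| := by rw [one_pow]
    _ ≤ |s - 1| * n * max |s| |1| ^ (n - 1) := abs_pow_sub_pow_le ..
    _ ≤ t * n * (1 + t) ^ n := by
      gcongr
      calc max |s| |1| ^ (n - 1) ≤ (1 + t) ^ (n - 1) := by gcongr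
        _ ≤ (1 + t) ^ n := pow_le_pow_right₀ (by linarith) (Nat.sub_le n 1)
    _ = n * t * (1 + t) ^ n := by ring

lemma abs_sub_le_of_le_one_add_pow_mul {n : ℕ} {x y t : ℝ} (hx : 0 ≤ x) (ht : 0 ≤ t)
    (hup : x ≤ (1 + t) ^ n * y) (hlow : t < 1 → (1 - t) ^ n * y ≤ x) :
    |x - y| ≤ (n + 1) * (1 + t) ^ n * t * y := by
  have hy : 0 ≤ y := nonneg_of_mul_nonneg_right (hx.trans hup) (by positivity)
  have hK : n * t * (1 + t) ^ n ≤ (n + 1) * (1 + t) ^ n * t := by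
    nlinarith [mul_nonneg ht (pow_nonneg (by linarith : (0:ℝ) ≤ 1 + t) n)]
  rw [abs_sub_le_iff]
  constructor
  · calc x - y ≤ ((1 + t) ^ n - 1) * y := by linarith
      _ ≤ n * t * (1 + t) ^ n * y := by
        gcongr
        exact (le_abs_self _).trans (abs_pow_sub_one_le (by simp [abs_of_nonneg ht]) n)
      _ ≤ _ := by gcongr
  · by_cases ht₁ : t < 1
    · calc y - x ≤ -((1 - t) ^ n - 1) * y := by linarith [hlow ht₁]
        _ ≤ n * t * (1 + t) ^ n * y := by
          gcongr
          refine (neg_le_abs _).trans (abs_pow_sub_one_le ?_ n)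
          rw [sub_sub_cancel_left, abs_neg, abs_of_nonneg ht]
        _ ≤ _ := by gcongr
    · have h1 : 1 ≤ (n + 1) * (1 + t) ^ n :=
        one_le_mul_of_one_le_of_one_le (by linarith [n.cast_nonneg (α := ℝ)])
          (one_le_pow₀ (by linarith))
      calc y - x ≤ y := by linarith
        _ ≤ (n + 1) * (1 + t) ^ n * t * y :=
          le_mul_of_one_le_left hy (one_le_mul_of_one_le_of_one_le h1 (not_lt.1 ht₁))

lemma Int.floor_sub_div_eq_iff {m a x : ℝ} (hm : 0 < m) {k : ℤ} :
    ⌊(x - a) / m⌋ = k ↔ x ∈ Ico (m * k + a) (m * k + a + m) := by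
  rw [Int.floor_eq_iff, le_div_iff₀ hm, div_lt_iff₀ hm, mem_Ico]
  constructor <;> rintro ⟨h₁, h₂⟩ <;> constructor <;> linarith

section ConvexGeometry

variable {E : Type*} [NormedAddCommGroup E] [NormedSpace ℝ E]

lemma exists_mem_closedBall_eq_add_smul_sub {x₀ y y₀ : E} {t ρ : ℝ} (ht : 0 ≤ t) (hρ : 0 ≤ ρ)
    (h : dist y y₀ ≤ t * ρ) : ∃ q ∈ closedBall x₀ ρ, y = y₀ + t • (q - x₀) := by
  have : y - y₀ + t • x₀ ∈ t • closedBall x₀ ρ := by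
    rw [smul_closedBall _ _ hρ, mem_closedBall, dist_eq_norm, Real.norm_of_nonneg ht]
    simpa [← dist_eq_norm] using h
  obtain ⟨q, hq, hqy⟩ := this
  exact ⟨q, hq, by rw [smul_sub, show t • q = _ from hqy]; abel⟩

variable {Ω : Set E} {x₀ : E} {ρ t : ℝ}

theorem Convex.mem_homothety_closure_of_dist_le (hΩ : Convex ℝ Ω) (hball : ball x₀ ρ ⊆ Ω)
    (hρ : 0 < ρ) (ht : 0 ≤ t) {p x : E} (hp : p ∈ Ω) (hx : dist x p ≤ t * ρ) :
    x ∈ AffineMap.homothety x₀ (1 + t) '' closure Ω := by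
  obtain ⟨q, hq, rfl⟩ := exists_mem_closedBall_eq_add_smul_sub (x₀ := x₀) ht hρ.le hx
  have hq : q ∈ closure Ω := closure_mono hball (closure_ball x₀ hρ.ne' ▸ hq)
  have ht' : 0 < 1 + t := by linarith
  refine ⟨(1 + t)⁻¹ • p + (t / (1 + t)) • q,
    hΩ.closure (subset_closure hp) hq (by positivity) (by positivity) (by field_simp), ?_⟩
  rw [AffineMap.homothety_apply, vsub_eq_sub, vadd_eq_add]
  match_scalars <;> field_simp
  ring

theorem Convex.mem_of_dist_homothety_le (hΩ : Convex ℝ Ω) (hΩo : IsOpen Ω)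
    (hball : ball x₀ ρ ⊆ Ω) (hρ : 0 < ρ) (ht₀ : 0 ≤ t) (ht₁ : t < 1) {y z : E} (hz : z ∈ Ω)
    (hy : dist y (AffineMap.homothety x₀ (1 - t) z) ≤ t * ρ) : y ∈ Ω := by
  obtain ⟨q, hq, rfl⟩ := exists_mem_closedBall_eq_add_smul_sub (x₀ := x₀) ht₀ hρ.le hy
  have hq : q ∈ closure Ω := closure_mono hball (closure_ball x₀ hρ.ne' ▸ hq)
  have := hΩ.combo_interior_closure_mem_interior (hΩo.interior_eq.symm ▸ hz) hq
    (sub_pos.2 ht₁) ht₀ (sub_add_cancel 1 t)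
  rw [hΩo.interior_eq] at this
  convert this using 1
  rw [AffineMap.homothety_apply, vsub_eq_sub, vadd_eq_add]
  module

end ConvexGeometry

namespace EuclideanSpace

variable {ι : Type*}

def shiftedLattice (m : ℝ) (a : EuclideanSpace ℝ ι) : Set (EuclideanSpace ℝ ι) :=
  {x | ∃ k : ι → ℤ, ∀ i, x i = m * k i + a i}

def halfOpenCube (m : ℝ) (p : EuclideanSpace ℝ ι) : Set (EuclideanSpace ℝ ι) :=
  {x | ∀ i, x i ∈ Ico (p i) (p i + m)}

lemma halfOpenCube_eq_preimage (m : ℝ) (p : EuclideanSpace ℝ ι) :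
    halfOpenCube m p =
      (MeasurableEquiv.toLp 2 (ι → ℝ)).symm ⁻¹' univ.pi fun i => Ico (p i) (p i + m) := by
  ext x
  simp [halfOpenCube]

lemma measurableSet_halfOpenCube [Fintype ι] (m : ℝ) (p : EuclideanSpace ℝ ι) :
    MeasurableSet (halfOpenCube m p) := by
  rw [halfOpenCube_eq_preimage]
  exact (MeasurableEquiv.toLp 2 _).symm.measurable (.univ_pi fun _ => measurableSet_Ico)

lemma volume_halfOpenCube [Fintype ι] {m : ℝ} (hm : 0 ≤ m) (p : EuclideanSpace ℝ ι) :
    volume (halfOpenCube m p) = ENNReal.ofReal (m ^ Fintype.card ι) := by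
  rw [halfOpenCube_eq_preimage, (volume_preserving_symm_measurableEquiv_toLp ι).measure_preimage
    (MeasurableSet.univ_pi fun _ => measurableSet_Ico).nullMeasurableSet, volume_pi_pi]
  simp [Real.volume_Ico, ENNReal.ofReal_pow hm]

lemma dist_le_of_mem_halfOpenCube [Fintype ι] {m : ℝ} (hm : 0 ≤ m) {p x : EuclideanSpace ℝ ι}
    (hx : x ∈ halfOpenCube m p) : dist x p ≤ √(Fintype.card ι) * m := by
  have hcoord (i : ι) : dist (x i) (p i) ^ 2 ≤ m ^ 2 := by
    obtain ⟨h₁, h₂⟩ := hx i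
    rw [Real.dist_eq, sq_abs]
    nlinarith
  calc dist x p = √(∑ i, dist (x i) (p i) ^ 2) := EuclideanSpace.dist_eq x p
    _ ≤ √(Fintype.card ι * m ^ 2) := by
      gcongr
      have := Finset.sum_le_card_nsmul Finset.univ _ _ fun i _ => hcoord i
      rwa [Finset.card_univ, nsmul_eq_mul] at this
    _ = √(Fintype.card ι) * m := by rw [Real.sqrt_mul (by positivity), Real.sqrt_sq hm]

lemma exists_mem_shiftedLattice_mem_halfOpenCube {m : ℝ} (hm : 0 < m)
    (a x : EuclideanSpace ℝ ι) : ∃ p ∈ shiftedLattice m a, x ∈ halfOpenCube m p :=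
  ⟨WithLp.toLp 2 fun i => m * ⌊(x i - a i) / m⌋ + a i, ⟨_, fun _ => rfl⟩,
    fun _ => (Int.floor_sub_div_eq_iff hm).1 rfl⟩

lemma pairwiseDisjoint_halfOpenCube {m : ℝ} (hm : 0 < m) (a : EuclideanSpace ℝ ι) :
    (shiftedLattice m a).PairwiseDisjoint (halfOpenCube m) := by
  rintro p ⟨k, hk⟩ q ⟨l, hl⟩ hpq
  refine disjoint_left.2 fun x hxp hxq => hpq (PiLp.ext fun i => ?_)
  have hxp := hxp i
  have hxq := hxq i
  rw [hk] at hxp ⊢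
  rw [hl] at hxq ⊢
  rw [← (Int.floor_sub_div_eq_iff hm).2 hxp, ← (Int.floor_sub_div_eq_iff hm).2 hxq]

lemma volume_biUnion_halfOpenCube [Fintype ι] {m : ℝ} (hm : 0 < m) {a : EuclideanSpace ℝ ι}
    {S : Set (EuclideanSpace ℝ ι)} (hS : S.Finite) (hSL : S ⊆ shiftedLattice m a) :
    volume (⋃ p ∈ S, halfOpenCube m p) = S.ncard * ENNReal.ofReal (m ^ Fintype.card ι) := by
  rw [← hS.coe_toFinset, Finset.set_biUnion_coe, measure_biUnion_finset
    (by simpa using (pairwiseDisjoint_halfOpenCube hm a).subset hSL)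
    (fun p _ => measurableSet_halfOpenCube m p)]
  simp [volume_halfOpenCube hm.le, ncard_eq_toFinset_card S hS]

lemma finite_inter_shiftedLattice [Fintype ι] {s : Set (EuclideanSpace ℝ ι)}
    (hs : Bornology.IsBounded s) {m : ℝ} (hm : 0 < m) (a : EuclideanSpace ℝ ι) :
    (s ∩ shiftedLattice m a).Finite := by
  -- otherwise arbitrarily many disjoint cubes of volume `m^D` fit in a bounded set
  by_contra hinf
  set c := ENNReal.ofReal (m ^ Fintype.card ι)
  have hc : c ≠ 0 := (ENNReal.ofReal_pos.2 (by positivity)).ne'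
  have hbound : volume (cthickening (√(Fintype.card ι) * m) s) / c ≠ ⊤ :=
    ENNReal.div_ne_top hs.cthickening.measure_lt_top.ne hc
  obtain ⟨n, hn⟩ := ENNReal.exists_nat_gt hbound
  obtain ⟨S, hSs, hSfin, rfl⟩ := Set.Infinite.exists_subset_ncard_eq hinf n
  refine hn.not_ge (ENNReal.le_div_iff_mul_le (.inl hc) (.inl ENNReal.ofReal_ne_top) |>.2 ?_)
  rw [← volume_biUnion_halfOpenCube hm hSfin (hSs.trans inter_subset_right)]
  refine measure_mono (iUnion₂_subset fun p hp x hx => ?_)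
  exact mem_cthickening_of_dist_le x p _ s (hSs hp).1 (dist_le_of_mem_halfOpenCube hm.le hx)

section Count

variable [Fintype ι] {Ω : Set (EuclideanSpace ℝ ι)} {x₀ : EuclideanSpace ℝ ι} {ρ m : ℝ}

theorem _root_.Convex.ncard_inter_shiftedLattice_le (hΩ : Convex ℝ Ω)
    (hΩb : Bornology.IsBounded Ω) (hball : ball x₀ ρ ⊆ Ω) (hρ : 0 < ρ) (hm : 0 < m)
    (a : EuclideanSpace ℝ ι) :
    ((Ω ∩ shiftedLattice m a).ncard : ℝ) ≤
      (1 + √(Fintype.card ι) * m / ρ) ^ Fintype.card ι *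
        (m ^ (-(Fintype.card ι : ℤ)) * (volume Ω).toReal) := by
  set t := √(Fintype.card ι) * m / ρ
  have ht : 0 ≤ t := by positivity
  have hcubes : (⋃ p ∈ Ω ∩ shiftedLattice m a, halfOpenCube m p) ⊆
      AffineMap.homothety x₀ (1 + t) '' closure Ω :=
    iUnion₂_subset fun p hp x hx => hΩ.mem_homothety_closure_of_dist_le hball hρ ht hp.1 <| by
      rw [div_mul_cancel₀ _ hρ.ne']; exact dist_le_of_mem_halfOpenCube hm.le hx
  have hvol := measure_mono (μ := volume) hcubes
  rw [volume_biUnion_halfOpenCube hm (finite_inter_shiftedLattice hΩb hm a) inter_subset_right,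
    Measure.addHaar_image_homothety, finrank_euclideanSpace,
    measure_closure_of_null_frontier (hΩ.addHaar_frontier volume)] at hvol
  have := ENNReal.toReal_mono (ENNReal.mul_ne_top ENNReal.ofReal_ne_top
    hΩb.measure_lt_top.ne) hvol
  rw [ENNReal.toReal_mul, ENNReal.toReal_mul, ENNReal.toReal_ofReal (abs_nonneg _),
    ENNReal.toReal_ofReal (by positivity), abs_of_nonneg (by positivity),
    ENNReal.toReal_natCast] at this
  rw [zpow_neg, zpow_natCast, mul_left_comm, ← div_eq_inv_mul, le_div_iff₀ (by positivity)]
  exact this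

theorem _root_.Convex.le_ncard_inter_shiftedLattice (hΩ : Convex ℝ Ω) (hΩo : IsOpen Ω)
    (hΩb : Bornology.IsBounded Ω) (hball : ball x₀ ρ ⊆ Ω) (hρ : 0 < ρ) (hm : 0 < m)
    (a : EuclideanSpace ℝ ι) (ht : √(Fintype.card ι) * m / ρ < 1) :
    (1 - √(Fintype.card ι) * m / ρ) ^ Fintype.card ι *
        (m ^ (-(Fintype.card ι : ℤ)) * (volume Ω).toReal) ≤
      ((Ω ∩ shiftedLattice m a).ncard : ℝ) := by
  set t := √(Fintype.card ι) * m / ρ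
  have hcubes : AffineMap.homothety x₀ (1 - t) '' Ω ⊆
      ⋃ p ∈ Ω ∩ shiftedLattice m a, halfOpenCube m p := by
    rintro y ⟨z, hz, rfl⟩
    obtain ⟨p, hpL, hyp⟩ := exists_mem_shiftedLattice_mem_halfOpenCube hm a
      (AffineMap.homothety x₀ (1 - t) z)
    refine mem_biUnion ⟨hΩ.mem_of_dist_homothety_le hΩo hball hρ (by positivity) ht hz ?_, hpL⟩ hyp
    rw [div_mul_cancel₀ _ hρ.ne', dist_comm]; exact dist_le_of_mem_halfOpenCube hm.le hyp
  have hvol := measure_mono (μ := volume) hcubes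
  rw [volume_biUnion_halfOpenCube hm (finite_inter_shiftedLattice hΩb hm a) inter_subset_right,
    Measure.addHaar_image_homothety, finrank_euclideanSpace] at hvol
  have := ENNReal.toReal_mono (by finiteness) hvol
  rw [ENNReal.toReal_mul, ENNReal.toReal_mul, ENNReal.toReal_ofReal (abs_nonneg _),
    ENNReal.toReal_ofReal (by positivity), abs_of_nonneg (pow_nonneg (sub_nonneg.2 ht.le) _),
    ENNReal.toReal_natCast] at this
  rw [zpow_neg, zpow_natCast, mul_left_comm, ← div_eq_inv_mul, div_le_iff₀ (by positivity)]
  exact this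

end Count

end EuclideanSpace

/-- Lattice point count in a convex body: if `Ω ⊂ ℝ^D` is a convex body containing a
ball of radius `ρ` and `0 < m ≤ ρ`, then for any `a ∈ ℝ^D` the number of points of the
shifted lattice `m·ℤ^D + a` inside `Ω` equals `m^{-D}·mes(Ω)` up to a multiplicative
error `1 + O_D(m/ρ)`. -/
theorem stmt_9 (D : ℕ) :
    ∃ C : ℝ, 0 < C ∧
      ∀ (Ω : Set (EuclideanSpace ℝ (Fin D))) (ρ m : ℝ) (a : EuclideanSpace ℝ (Fin D)),
        IsOpen Ω → Bornology.IsBounded Ω → Convex ℝ Ω →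
        (∃ x, ball x ρ ⊆ Ω) → 0 < m → m ≤ ρ →
        (Ω ∩ {x | ∃ k : Fin D → ℤ, ∀ i, x i = m * k i + a i}).Finite ∧
        |((Ω ∩ {x | ∃ k : Fin D → ℤ, ∀ i, x i = m * k i + a i}).ncard : ℝ)
            - m ^ (-(D : ℤ)) * (volume Ω).toReal|
          ≤ C * (m / ρ) * (m ^ (-(D : ℤ)) * (volume Ω).toReal) := by
  refine ⟨(D + 1) * (1 + √D) ^ (D + 1), by positivity, ?_⟩
  rintro Ω ρ m a hΩo hΩb hΩc ⟨x₀, hball⟩ hm hmρ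
  have hρ : 0 < ρ := hm.trans_le hmρ
  have hup := hΩc.ncard_inter_shiftedLattice_le hΩb hball hρ hm a
  have hlow := hΩc.le_ncard_inter_shiftedLattice hΩo hΩb hball hρ hm a
  simp only [Fintype.card_fin] at hup hlow
  refine ⟨EuclideanSpace.finite_inter_shiftedLattice hΩb hm a, ?_⟩
  have ht : √D * m / ρ ≤ √D := div_le_of_le_mul₀ hρ.le (by positivity) (by gcongr)
  calc _ ≤ (D + 1) * (1 + √D * m / ρ) ^ D * (√D * m / ρ) *
          (m ^ (-(D : ℤ)) * (volume Ω).toReal) :=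
        abs_sub_le_of_le_one_add_pow_mul (Nat.cast_nonneg _) (by positivity) hup hlow
    _ ≤ (D + 1) * (1 + √D) ^ D * ((1 + √D) * (m / ρ)) *
          (m ^ (-(D : ℤ)) * (volume Ω).toReal) := by
        gcongr
        rw [mul_div_assoc]
        gcongr
        linarith
    _ = _ := by ring
end

section
/- (Averaging periodic functions over convex bodies.) Let $m \ge 1$ be an integer and $f : \mathbb{Z}^D \to \mathbb{R}_{\ge 0}$ a function periodic with period $m$ in each coordinate. Let $\Omega \subset \mathbb{R}^D$ be a convex body with inradius $r(\Omega) \ge C_D m$ for a sufficiently large constant $C_D$ depending only on $D$. Then $\mathbb{E}_{x \in \Omega \cap \mathbb{Z}^D} f(x) = \big(1 + O_D(\tfrac{m}{r(\Omega)})\big) \, \mathbb{E}_{y \in (\mathbb{Z}/m\mathbb{Z})^D} f(y)$. -/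
/-!
Split the lattice points of `Ω` by their residue `a` modulo `m`. The points with residue `a` are
the `a + m k` with `k` a lattice point of `K_a = m⁻¹ • (Ω - a)`: a convex body of volume
`V = m^(-D) vol Ω`, independent of `a`, containing a ball of radius `ρ / m`. Every lattice point
of `K_a` owns a unit cube of diameter `√D`, and convexity absorbs these cubes between the
homothetic copies `(1 ∓ t) K_a` about the centre of the ball once `√D < t ρ / m`; so each
residue class has between `(1 - t)^D V` and `(1 + t)^D V` points. As `f` only depends on the
residue, its average over `Ω ∩ ℤ^D` is a weighted mean of the values `f a` with weights that
agree up to a factor `1 + O_D(t)`, and `t = (D + 1) m / ρ` gives the claim.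
-/

open MeasureTheory Metric Set Pointwise

section ConvexBody

variable {E : Type*} [NormedAddCommGroup E] [NormedSpace ℝ E] {K : Set E} {x₀ z p q : E}
  {r t : ℝ}

theorem Convex.ball_homothety_subset_s11 (hK : Convex ℝ K) (hball : ball x₀ r ⊆ K) (hz : z ∈ K)
    (ht₀ : 0 ≤ t) (ht₁ : t ≤ 1) : ball (AffineMap.homothety x₀ (1 - t) z) (t * r) ⊆ K := by
  rcases ht₀.eq_or_lt with rfl | ht₀
  · simp
  intro y hy
  set u := x₀ + t⁻¹ • (y - AffineMap.homothety x₀ (1 - t) z)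
  have hu : u ∈ ball x₀ r := by
    rw [mem_ball, dist_eq_norm, add_sub_cancel_left, norm_smul, Real.norm_of_nonneg (by positivity),
      inv_mul_lt_iff₀ ht₀, ← dist_eq_norm]
    exact hy
  have hy : y = (1 - t) • z + t • u := by
    simp only [u, AffineMap.homothety_apply, vsub_eq_sub, vadd_eq_add, smul_add,
      smul_inv_smul₀ ht₀.ne']
    module
  rw [hy]
  exact hK hz (hball hu) (by linarith) ht₀.le (by ring)

theorem Convex.mem_homothety_image_of_dist_lt (hK : Convex ℝ K) (hball : ball x₀ r ⊆ K)
    (hp : p ∈ K) (ht : 0 ≤ t) (hq : dist q p < t * r) :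
    q ∈ AffineMap.homothety x₀ (1 + t) '' K := by
  have ht' : 0 < 1 + t := by linarith
  refine ⟨AffineMap.homothety x₀ (1 + t)⁻¹ q, ?_, ?_⟩
  · have h1 : (1 + t)⁻¹ = 1 - t / (1 + t) := by field_simp; ring
    refine hK.ball_homothety_subset_s11 hball hp (by positivity)
      (div_le_one_of_le₀ (by linarith) ht'.le) ?_
    have hdist : dist (AffineMap.homothety x₀ (1 + t)⁻¹ q) (AffineMap.homothety x₀ (1 + t)⁻¹ p)
        = (1 + t)⁻¹ * dist q p := by
      simp only [dist_eq_norm, AffineMap.homothety_apply, vsub_eq_sub, vadd_eq_add,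
        add_sub_add_right_eq_sub, ← smul_sub, sub_sub_sub_cancel_right, norm_smul,
        Real.norm_of_nonneg (inv_nonneg.mpr ht'.le)]
    rw [← h1, mem_ball, hdist, div_mul_eq_mul_div, inv_mul_eq_div,
      div_lt_div_iff_of_pos_right ht']
    exact hq
  · rw [← AffineMap.comp_apply, ← AffineMap.homothety_mul, mul_inv_cancel₀ ht'.ne',
      AffineMap.homothety_one, AffineMap.id_apply]

end ConvexBody

section Lattice

variable {ι : Type*}

def intVec (x : ι → ℤ) : EuclideanSpace ℝ ι := WithLp.toLp 2 (fun i => (x i : ℝ))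

def latticePoints (K : Set (EuclideanSpace ℝ ι)) : Set (ι → ℤ) := intVec ⁻¹' K

def unitCube (x : ι → ℤ) : Set (EuclideanSpace ℝ ι) := {y | ∀ i, ⌊y i⌋ = x i}

theorem unitCube_eq_preimage (x : ι → ℤ) :
    unitCube x = (MeasurableEquiv.toLp 2 (ι → ℝ)).symm ⁻¹'
      univ.pi fun i => Ico (x i : ℝ) (x i + 1) := by
  ext y
  simp [unitCube, Int.floor_eq_iff]

theorem pairwise_disjoint_unitCube : Pairwise (Function.onFun Disjoint (unitCube (ι := ι))) :=
  fun _ _ hne => disjoint_left.mpr fun _ hy hy' => hne (funext fun i => (hy i).symm.trans (hy' i))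

theorem mem_unitCube_floor (y : EuclideanSpace ℝ ι) : y ∈ unitCube fun i => ⌊y i⌋ :=
  fun _ => rfl

variable [Fintype ι] {K : Set (EuclideanSpace ℝ ι)}

theorem measurableSet_unitCube (x : ι → ℤ) : MeasurableSet (unitCube x) := by
  rw [unitCube_eq_preimage]
  exact (MeasurableEquiv.measurable _) (.univ_pi fun _ => measurableSet_Ico)

theorem volume_unitCube (x : ι → ℤ) : volume (unitCube x) = 1 := by
  rw [unitCube_eq_preimage,
    (EuclideanSpace.volume_preserving_symm_measurableEquiv_toLp ι).measure_preimage
      (MeasurableSet.univ_pi fun _ => measurableSet_Ico).nullMeasurableSet, volume_pi_pi]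
  simp

theorem dist_intVec_le_of_mem_unitCube {x : ι → ℤ} {y : EuclideanSpace ℝ ι} (hy : y ∈ unitCube x) :
    dist (intVec x) y ≤ √(Fintype.card ι) := by
  rw [EuclideanSpace.dist_eq]
  gcongr
  calc ∑ i, dist (x i : ℝ) (y i) ^ 2 ≤ ∑ _i : ι, (1 : ℝ) := by
        gcongr with i
        rw [← hy i, Real.dist_eq, sq_le_one_iff_abs_le_one, abs_abs, abs_le]
        constructor <;> linarith [Int.floor_le (y i), Int.lt_floor_add_one (y i)]
    _ = Fintype.card ι := by simp

theorem Bornology.IsBounded.finite_latticePoints (hK : Bornology.IsBounded K) : (latticePoints K).Finite := by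
  obtain ⟨R, hR⟩ := hK.subset_closedBall 0
  refine (isCompact_closedBall (0 : ι → ℤ) R).finite_of_discrete.subset fun x hx => ?_
  have hxR : ‖intVec x‖ ≤ R := mem_closedBall_zero_iff.mp (hR hx)
  rw [mem_closedBall_zero_iff, pi_norm_le_iff_of_nonneg ((norm_nonneg _).trans hxR)]
  intro i
  rw [← Int.norm_cast_real]
  exact (PiLp.norm_apply_le (intVec x) i).trans hxR

variable {x₀ : EuclideanSpace ℝ ι} {r t : ℝ}

theorem volume_real_image_homothety (c : ℝ) (hc : 0 ≤ c) :
    volume.real (AffineMap.homothety x₀ c '' K) = c ^ Fintype.card ι * volume.real K := by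
  rw [measureReal_def, Measure.addHaar_image_homothety, finrank_euclideanSpace, ENNReal.toReal_mul,
    ENNReal.toReal_ofReal (abs_nonneg _), abs_of_nonneg (by positivity), measureReal_def]

theorem one_sub_pow_mul_volume_le_ncard_latticePoints (hK : Convex ℝ K)
    (hKb : Bornology.IsBounded K) (hball : ball x₀ r ⊆ K) (ht₀ : 0 ≤ t) (ht₁ : t ≤ 1)
    (htr : √(Fintype.card ι) < t * r) :
    (1 - t) ^ Fintype.card ι * volume.real K ≤ (latticePoints K).ncard := by
  have hA := hKb.finite_latticePoints
  have hcover : AffineMap.homothety x₀ (1 - t) '' K ⊆ ⋃ x ∈ hA.toFinset, unitCube x := by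
    rintro _ ⟨z, hz, rfl⟩
    set y := AffineMap.homothety x₀ (1 - t) z
    refine mem_biUnion (x := fun i => ⌊y i⌋) ?_ (mem_unitCube_floor y)
    rw [Finite.coe_toFinset]
    exact hK.ball_homothety_subset_s11 hball hz ht₀ ht₁
      ((dist_intVec_le_of_mem_unitCube (mem_unitCube_floor y)).trans_lt htr)
  calc (1 - t) ^ Fintype.card ι * volume.real K
      = volume.real (AffineMap.homothety x₀ (1 - t) '' K) :=
        (volume_real_image_homothety _ (by linarith)).symm
    _ ≤ volume.real (⋃ x ∈ hA.toFinset, unitCube x) :=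
        measureReal_mono hcover (measure_biUnion_lt_top hA.toFinset.finite_toSet
          fun x _ => by simp [volume_unitCube]).ne
    _ ≤ ∑ x ∈ hA.toFinset, volume.real (unitCube x) := measureReal_biUnion_finset_le _ _
    _ = (latticePoints K).ncard := by
        simp [measureReal_def, volume_unitCube, ncard_eq_toFinset_card _ hA]

theorem ncard_latticePoints_le_one_add_pow_mul_volume (hK : Convex ℝ K)
    (hKb : Bornology.IsBounded K) (hball : ball x₀ r ⊆ K) (ht₀ : 0 ≤ t)
    (htr : √(Fintype.card ι) < t * r) :
    ((latticePoints K).ncard : ℝ) ≤ (1 + t) ^ Fintype.card ι * volume.real K := by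
  have hA := hKb.finite_latticePoints
  have hcover : ⋃ x ∈ hA.toFinset, unitCube x ⊆ AffineMap.homothety x₀ (1 + t) '' K := by
    refine iUnion₂_subset fun x hx y hy => ?_
    rw [Finite.mem_toFinset] at hx
    exact hK.mem_homothety_image_of_dist_lt hball hx ht₀
      ((dist_comm _ _).trans_le (dist_intVec_le_of_mem_unitCube hy) |>.trans_lt htr)
  calc ((latticePoints K).ncard : ℝ) = ∑ x ∈ hA.toFinset, volume.real (unitCube x) := by
        simp [measureReal_def, volume_unitCube, ncard_eq_toFinset_card _ hA]
    _ = volume.real (⋃ x ∈ hA.toFinset, unitCube x) :=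
        (measureReal_biUnion_finset (pairwise_disjoint_unitCube.set_pairwise _)
          (fun x _ => measurableSet_unitCube x) (by simp [volume_unitCube])).symm
    _ ≤ volume.real (AffineMap.homothety x₀ (1 + t) '' K) := by
        refine measureReal_mono hcover ?_
        rw [Measure.addHaar_image_homothety]
        exact ENNReal.mul_ne_top ENNReal.ofReal_ne_top hKb.measure_lt_top.ne
    _ = (1 + t) ^ Fintype.card ι * volume.real K := volume_real_image_homothety _ (by linarith)

theorem latticePoints_nonempty_of_ball_subset (hball : ball x₀ r ⊆ K)
    (hr : √(Fintype.card ι) < r) : (latticePoints K).Nonempty :=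
  ⟨fun i => ⌊x₀ i⌋, hball <|
    (dist_intVec_le_of_mem_unitCube (mem_unitCube_floor x₀)).trans_lt hr⟩

theorem ncard_latticePoints_smul_vadd_mem_Icc (hK : Convex ℝ K) (hKb : Bornology.IsBounded K)
    (hball : ball x₀ r ⊆ K) {c : ℝ} (hc : 0 < c) (v : EuclideanSpace ℝ ι) (ht₀ : 0 ≤ t)
    (ht₁ : t ≤ 1) (htr : √(Fintype.card ι) < t * (c * r)) :
    ((latticePoints (c • (v +ᵥ K))).ncard : ℝ) ∈
      Icc ((1 - t) ^ Fintype.card ι * (c ^ Fintype.card ι * volume.real K))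
        ((1 + t) ^ Fintype.card ι * (c ^ Fintype.card ι * volume.real K)) := by
  have hK' : Convex ℝ (c • (v +ᵥ K)) := (hK.vadd v).smul c
  have hKb' : Bornology.IsBounded (c • (v +ᵥ K)) := (hKb.vadd v).smul₀ c
  have hball' : ball (c • (v +ᵥ x₀)) (c * r) ⊆ c • (v +ᵥ K) := by
    have h := _root_.smul_ball hc.ne' (v +ᵥ x₀) r
    rw [Real.norm_of_nonneg hc.le] at h
    rw [← h, ← vadd_ball]
    exact smul_set_mono (vadd_set_mono hball)
  have hvol : volume.real (c • (v +ᵥ K)) = c ^ Fintype.card ι * volume.real K := by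
    rw [measureReal_def, Measure.addHaar_smul, measure_vadd, finrank_euclideanSpace,
      ENNReal.toReal_mul, ENNReal.toReal_ofReal (abs_nonneg _), abs_of_pos (by positivity),
      measureReal_def]
  rw [← hvol]
  exact ⟨one_sub_pow_mul_volume_le_ncard_latticePoints hK' hKb' hball' ht₀ ht₁ htr,
    ncard_latticePoints_le_one_add_pow_mul_volume hK' hKb' hball' ht₀ htr⟩

end Lattice

section Residues

variable {ι : Type*}

def withResidue (m : ℕ) (a : ι → Fin m) (k : ι → ℤ) : ι → ℤ := fun i => a i + m * k i

def residue (m : ℕ) [NeZero m] (x : ι → ℤ) : ι → Fin m := fun i => (Int.divModEquiv m (x i)).2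

theorem intVec_withResidue {m : ℕ} (a : ι → Fin m) (k : ι → ℤ) :
    intVec (withResidue m a k) = intVec (fun i => (a i : ℤ)) + (m : ℝ) • intVec k := by
  ext i
  simp [intVec, withResidue]

variable {m : ℕ} [NeZero m]

theorem residue_withResidue (a : ι → Fin m) (k : ι → ℤ) : residue m (withResidue m a k) = a := by
  funext i
  have h := (Int.divModEquiv m).apply_symm_apply (k i, a i)
  rw [Int.divModEquiv_symm_apply, mul_comm, add_comm] at h
  simp only [residue, withResidue, h]

theorem withResidue_residue (x : ι → ℤ) : withResidue m (residue m x) (fun i => x i / m) = x := by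
  funext i
  have h := (Int.divModEquiv m).symm_apply_apply (x i)
  rw [Int.divModEquiv_symm_apply, mul_comm, add_comm] at h
  exact h

theorem withResidue_injective (a : ι → Fin m) : Function.Injective (withResidue m a) := by
  intro k k' h
  funext i
  have := congrFun h i
  simp only [withResidue, add_right_inj, mul_eq_mul_left_iff, Nat.cast_eq_zero, NeZero.ne m,
    or_false] at this
  exact this

theorem eq_residue_of_periodic {M : Type*} {f : (ι → ℤ) → M}
    (hf : ∀ x k : ι → ℤ, f (fun i => x i + m * k i) = f x) (x : ι → ℤ) :
    f x = f fun i => (residue m x i : ℤ) := by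
  conv_lhs => rw [← withResidue_residue (m := m) x]
  exact hf _ _

theorem residue_fiber_eq_image (S : Set (ι → ℤ)) (a : ι → Fin m) :
    {x ∈ S | residue m x = a} = withResidue m a '' (withResidue m a ⁻¹' S) := by
  ext x
  constructor
  · rintro ⟨hx, rfl⟩
    exact ⟨_, by rwa [mem_preimage, withResidue_residue], withResidue_residue x⟩
  · rintro ⟨k, hk, rfl⟩
    exact ⟨hk, residue_withResidue a k⟩

theorem preimage_withResidue_latticePoints (K : Set (EuclideanSpace ℝ ι)) (a : ι → Fin m) :
    withResidue m a ⁻¹' latticePoints K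
      = latticePoints ((m : ℝ)⁻¹ • (-intVec (fun i => (a i : ℤ)) +ᵥ K)) := by
  ext k
  rw [mem_preimage, latticePoints, latticePoints, mem_preimage, mem_preimage,
    mem_smul_set_iff_inv_smul_mem₀ (inv_ne_zero (Nat.cast_ne_zero.mpr (NeZero.ne m))), inv_inv,
    mem_vadd_set_iff_neg_vadd_mem, neg_neg, vadd_eq_add, intVec_withResidue]

variable [Fintype ι]

theorem card_filter_residue_eq_ncard {S : Set (ι → ℤ)} (hS : S.Finite) (a : ι → Fin m) :
    {x ∈ hS.toFinset | residue m x = a}.card = (withResidue m a ⁻¹' S).ncard := by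
  rw [← ncard_coe_finset, Finset.coe_filter]
  simp only [Finite.mem_toFinset]
  rw [residue_fiber_eq_image, ncard_image_of_injective _ (withResidue_injective a)]

theorem ncard_eq_sum_ncard_preimage_withResidue [DecidableEq ι] {S : Set (ι → ℤ)} (hS : S.Finite) :
    S.ncard = ∑ a : ι → Fin m, (withResidue m a ⁻¹' S).ncard := by
  rw [ncard_eq_toFinset_card _ hS, Finset.card_eq_sum_card_fiberwise (f := residue m)
    (t := Finset.univ) (fun _ _ => Finset.mem_coe.mpr (Finset.mem_univ _))]
  exact Finset.sum_congr rfl fun a _ => card_filter_residue_eq_ncard hS a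

theorem finsum_mem_eq_sum_ncard_smul [DecidableEq ι] {M : Type*} [AddCommMonoid M] {f : (ι → ℤ) → M}
    (hf : ∀ x k : ι → ℤ, f (fun i => x i + m * k i) = f x) {S : Set (ι → ℤ)} (hS : S.Finite) :
    ∑ᶠ x ∈ S, f x = ∑ a : ι → Fin m, (withResidue m a ⁻¹' S).ncard • f fun i => (a i : ℤ) := by
  rw [finsum_mem_eq_finite_toFinset_sum _ hS, ← Finset.sum_fiberwise _ (residue m)]
  refine Finset.sum_congr rfl fun a _ => ?_
  rw [← card_filter_residue_eq_ncard hS a, ← Finset.sum_const]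
  refine Finset.sum_congr rfl fun x hx => ?_
  rw [eq_residue_of_periodic hf x, (Finset.mem_filter.mp hx).2]

end Residues

theorem one_add_pow_le_one_add_mul {x : ℝ} (hx₀ : 0 ≤ x) (hx₁ : x ≤ 1) (n : ℕ) :
    (1 + x) ^ n ≤ 1 + (2 ^ n - 1) * x := by
  induction n with
  | zero => simp
  | succ n ih =>
    have h2n : (1 : ℝ) ≤ 2 ^ n := one_le_pow₀ (by norm_num)
    calc (1 + x) ^ (n + 1) ≤ (1 + (2 ^ n - 1) * x) * (1 + x) := by
          rw [pow_succ]; gcongr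
      _ ≤ 1 + (2 ^ (n + 1) - 1) * x := by
          rw [pow_succ]
          nlinarith [mul_le_mul_of_nonneg_left hx₁ (mul_nonneg (sub_nonneg.mpr h2n) hx₀)]

theorem one_add_pow_le_mul_one_sub_pow {t : ℝ} (ht₀ : 0 ≤ t) (ht : t ≤ 1 / 4) (n : ℕ) :
    (1 + t) ^ n ≤ (1 + 2 ^ (n + 2) * t) * (1 - t) ^ n := by
  calc (1 + t) ^ n ≤ ((1 + 4 * t) * (1 - t)) ^ n := by gcongr; nlinarith
    _ = (1 + 4 * t) ^ n * (1 - t) ^ n := mul_pow ..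
    _ ≤ (1 + 2 ^ (n + 2) * t) * (1 - t) ^ n := by
        gcongr
        · exact pow_nonneg (by linarith) n
        · calc (1 + 4 * t) ^ n ≤ 1 + (2 ^ n - 1) * (4 * t) :=
                one_add_pow_le_one_add_mul (by positivity) (by linarith) n
            _ ≤ 1 + 2 ^ (n + 2) * t := by rw [pow_add]; nlinarith

theorem abs_sum_mul_div_sum_sub_mean_le {α : Type*} [Fintype α] [Nonempty α] {g N : α → ℝ}
    (hg : ∀ a, 0 ≤ g a) {L U δ : ℝ} (hL : 0 < L) (hN : ∀ a, N a ∈ Set.Icc L U)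
    (hU : U ≤ (1 + δ) * L) :
    |(∑ a, N a * g a) / (∑ a, N a) - (∑ a, g a) / Fintype.card α|
      ≤ δ * ((∑ a, g a) / Fintype.card α) := by
  set n : ℝ := (Fintype.card α : ℝ)
  set F := ∑ a, g a
  have hn : 0 < n := Nat.cast_pos.mpr Fintype.card_pos
  have hF : 0 ≤ F := Finset.sum_nonneg fun a _ => hg a
  have hLU : L ≤ U := (hN (Classical.arbitrary α)).1.trans (hN _).2
  have hδ : 0 < 1 + δ := pos_of_mul_pos_left (hL.trans_le (hLU.trans hU)) hL.le
  have hSlo : L * F ≤ ∑ a, N a * g a := by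
    rw [Finset.mul_sum]
    exact Finset.sum_le_sum fun a _ => mul_le_mul_of_nonneg_right (hN a).1 (hg a)
  have hShi : ∑ a, N a * g a ≤ U * F := by
    rw [Finset.mul_sum]
    exact Finset.sum_le_sum fun a _ => mul_le_mul_of_nonneg_right (hN a).2 (hg a)
  have hNlo : n * L ≤ ∑ a, N a := by
    simpa [n] using Finset.sum_le_sum fun a (_ : a ∈ Finset.univ) => (hN a).1
  have hNhi : ∑ a, N a ≤ n * U := by
    simpa [n] using Finset.sum_le_sum fun a (_ : a ∈ Finset.univ) => (hN a).2
  have hNpos : 0 < ∑ a, N a := (mul_pos hn hL).trans_le hNlo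
  have hU₀ : 0 < U := hL.trans_le hLU
  rw [abs_sub_le_iff, sub_le_iff_le_add', sub_le_comm]
  constructor
  · calc (∑ a, N a * g a) / ∑ a, N a ≤ U * F / (n * L) :=
          div_le_div₀ (by positivity) hShi (by positivity) hNlo
      _ ≤ (1 + δ) * L * F / (n * L) := by gcongr
      _ = F / n + δ * (F / n) := by field_simp
  · calc F / n - δ * (F / n) ≤ F / (n * (1 + δ)) := by
          rw [le_div_iff₀ (by positivity)]; field_simp; nlinarith [sq_nonneg δ]
      _ ≤ L * F / (n * U) := by
          rw [div_le_div_iff₀ (by positivity) (by positivity)]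
          nlinarith [mul_le_mul_of_nonneg_left hU (mul_nonneg hF hn.le)]
      _ ≤ (∑ a, N a * g a) / ∑ a, N a := div_le_div₀ (hSlo.trans' (by positivity)) hSlo hNpos hNhi

theorem abs_average_latticePoints_sub_average_le {ι : Type*} [Fintype ι] [DecidableEq ι]
    {m : ℕ} [NeZero m] {f : (ι → ℤ) → ℝ} (hf₀ : ∀ x, 0 ≤ f x)
    (hf : ∀ x k : ι → ℤ, f (fun i => x i + m * k i) = f x) {Ω : Set (EuclideanSpace ℝ ι)}
    (hΩ : Convex ℝ Ω) (hΩb : Bornology.IsBounded Ω) {x₀ : EuclideanSpace ℝ ι} {ρ t : ℝ}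
    (hball : ball x₀ ρ ⊆ Ω) (ht₀ : 0 ≤ t) (ht : t ≤ 1 / 4)
    (htρ : √(Fintype.card ι) * m < t * ρ) :
    |(∑ᶠ x ∈ latticePoints Ω, f x) / (latticePoints Ω).ncard
        - (1 / (m : ℝ) ^ Fintype.card ι) * ∑ a : ι → Fin m, f (fun i => (a i : ℤ))|
      ≤ 2 ^ (Fintype.card ι + 2) * t *
        ((1 / (m : ℝ) ^ Fintype.card ι) * ∑ a : ι → Fin m, f (fun i => (a i : ℤ))) := by
  set n := Fintype.card ι
  have hm : (0 : ℝ) < m := Nat.cast_pos.mpr (NeZero.pos m)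
  have hρ : 0 < ρ := pos_of_mul_pos_right ((by positivity : 0 ≤ √(n : ℝ) * m).trans_lt htρ) ht₀
  set V := (m : ℝ)⁻¹ ^ n * volume.real Ω
  have hV : 0 < V := by
    refine mul_pos (by positivity) (ENNReal.toReal_pos ?_ hΩb.measure_lt_top.ne)
    exact ((measure_ball_pos volume x₀ hρ).trans_le (measure_mono hball)).ne'
  have hN (a : ι → Fin m) := ncard_latticePoints_smul_vadd_mem_Icc hΩ hΩb hball
    (inv_pos.mpr hm) (-intVec fun i => (a i : ℤ)) ht₀ (by linarith)
    (by rwa [← mul_assoc, mul_comm t, mul_assoc, inv_mul_eq_div, lt_div_iff₀ hm])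
  have hA := hΩb.finite_latticePoints
  rw [finsum_mem_eq_sum_ncard_smul hf hA, ncard_eq_sum_ncard_preimage_withResidue (m := m) hA]
  simp only [preimage_withResidue_latticePoints, nsmul_eq_mul, Nat.cast_sum, one_div_mul_eq_div]
  have hcard : (m : ℝ) ^ n = Fintype.card (ι → Fin m) := by simp [n]
  rw [hcard]
  have hmean := abs_sum_mul_div_sum_sub_mean_le (g := fun a => f fun i => (a i : ℤ))
    (fun _ => hf₀ _) (mul_pos (pow_pos (by linarith) n) hV) hN
    ((mul_le_mul_of_nonneg_right (one_add_pow_le_mul_one_sub_pow ht₀ ht n) hV.le).trans_eq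
      (mul_assoc _ _ _))
  exact hmean

/-- Averaging lemma: if `f : ℤ^D → ℝ≥0` is periodic of period `m` in each coordinate
and `Ω ⊂ ℝ^D` is a convex body containing a ball of radius `ρ ≥ C_D · m`, then the
average of `f` over the lattice points `Ω ∩ ℤ^D` equals the mean of `f` over a single
period `(ℤ/mℤ)^D` (computed as the average over `{0,…,m-1}^D`) up to a multiplicative
factor `1 + O_D(m/ρ)`. -/
theorem stmt_11 (D : ℕ) :
    ∃ C : ℝ, 0 < C ∧
      ∀ (m : ℕ) (f : (Fin D → ℤ) → ℝ) (Ω : Set (EuclideanSpace ℝ (Fin D))) (ρ : ℝ),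
        1 ≤ m → (∀ x, 0 ≤ f x) →
        (∀ (x k : Fin D → ℤ), f (fun i => x i + m * k i) = f x) →
        IsOpen Ω → Bornology.IsBounded Ω → Convex ℝ Ω →
        (∃ x, ball x ρ ⊆ Ω) → C * m ≤ ρ →
        (({x : Fin D → ℤ | WithLp.toLp 2 (fun i => (x i : ℝ)) ∈ Ω}).Finite ∧
          ({x : Fin D → ℤ | WithLp.toLp 2 (fun i => (x i : ℝ)) ∈ Ω}).Nonempty ∧
          |(∑ᶠ x ∈ {x : Fin D → ℤ | WithLp.toLp 2 (fun i => (x i : ℝ)) ∈ Ω}, f x)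
              / ({x : Fin D → ℤ | WithLp.toLp 2 (fun i => (x i : ℝ)) ∈ Ω}).ncard
            - (1 / (m : ℝ) ^ D) * ∑ y : Fin D → Fin m, f (fun i => (y i : ℤ))|
          ≤ C * ((m : ℝ) / ρ) *
            ((1 / (m : ℝ) ^ D) * ∑ y : Fin D → Fin m, f (fun i => (y i : ℤ)))) := by
  refine ⟨2 ^ (D + 2) * (D + 1), by positivity, ?_⟩
  intro m f Ω ρ hm hf₀ hf _ hΩb hΩ ⟨x₀, hball⟩ hρ
  have : NeZero m := ⟨by omega⟩
  have hm₀ : (1 : ℝ) ≤ m := Nat.one_le_cast.mpr hm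
  have h4 : (4 : ℝ) ≤ 2 ^ (D + 2) := by
    calc (4 : ℝ) = 2 ^ 2 := by norm_num
      _ ≤ 2 ^ (D + 2) := pow_le_pow_right₀ (by norm_num) (by omega)
  have hρ₀ : 0 < ρ := lt_of_lt_of_le (by positivity) hρ
  have hsqrt : √(D : ℝ) < D + 1 := (Real.sqrt_lt' (by positivity)).mpr (by nlinarith)
  have hDρ : ((D : ℝ) + 1) * m ≤ ρ / 4 := by
    rw [le_div_iff₀ (by norm_num)]
    nlinarith [mul_le_mul_of_nonneg_left h4 (by positivity : (0 : ℝ) ≤ (D + 1) * m)]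
  refine ⟨hΩb.finite_latticePoints, latticePoints_nonempty_of_ball_subset hball ?_, ?_⟩
  · rw [Fintype.card_fin]
    nlinarith
  · have key := abs_average_latticePoints_sub_average_le hf₀ hf hΩ hΩb hball
      (t := (D + 1) * m / ρ) (by positivity) (by rw [div_le_iff₀ hρ₀]; linarith)
      (by rw [Fintype.card_fin, div_mul_cancel₀ _ hρ₀.ne']; gcongr)
    rw [Fintype.card_fin] at key
    rwa [show (2 : ℝ) ^ (D + 2) * (D + 1) * (m / ρ) = 2 ^ (D + 2) * ((D + 1) * m / ρ) by ring]
end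

section
/- (Covering inequality for averages.) Let $\Omega \subset \mathbb{R}^D$ be a convex body with inradius $r(\Omega) > C_D$ for a sufficiently large constant $C_D > 1$, and let $f : \mathbb{Z}^D \to \mathbb{R}_{\ge 0}$. Then $\mathbb{E}_{x \in \Omega \cap \mathbb{Z}^D} f(x) \ll_D \sup_{y \in \mathbb{R}^D} \mathbb{E}_{x \in (y + [-r(\Omega), r(\Omega)]^D) \cap \mathbb{Z}^D} f(x)$. -/
/-!
Let `S` be the lattice points of `Ω` and `Q` those of the cube `[-ρ, ρ]^D`. Averaging the cube
bound over the translates `y + Q`, `y ∈ S - Q`, gives `∑_S f ≤ K |S - Q|`. To compare `|S - Q|`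
with `|S|`, contract `ℤ^D` towards the centre `x₀` of the inscribed ball by the factor
`t = 1 / (2(D + 1))` and round back to the lattice. The image of `p - q` lies within
`D (1/2 + tρ)` of `(1 - t) x₀ + t p`, the centre of a ball of radius `(1 - t) ρ` inside `Ω` by
convexity, hence in `S` once `ρ > D`; and each fibre of this map lies in a cube of side `1 / t`,
so has at most `(2D + 3)^D` points.
-/

open Finset Metric
open scoped Pointwise

theorem Convex.mem_of_dist_combo_lt {E : Type*} [NormedAddCommGroup E] [NormedSpace ℝ E]
    {Ω : Set E} (hΩ : Convex ℝ Ω) {x₀ p v : E} {ρ t : ℝ} (hball : ball x₀ ρ ⊆ Ω) (hp : p ∈ Ω)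
    (ht₀ : 0 ≤ t) (ht₁ : t < 1) (hv : dist v ((1 - t) • x₀ + t • p) < (1 - t) * ρ) : v ∈ Ω := by
  have hs : 0 < 1 - t := by linarith
  set b := x₀ + (1 - t)⁻¹ • (v - ((1 - t) • x₀ + t • p))
  have hb : b ∈ ball x₀ ρ := by
    rw [mem_ball, dist_eq_norm, add_sub_cancel_left, norm_smul, norm_inv,
      Real.norm_of_nonneg hs.le, ← dist_eq_norm, inv_mul_lt_iff₀ hs]
    exact hv
  have hvb : v = (1 - t) • b + t • p := by
    simp only [b, smul_add, smul_smul, mul_inv_cancel₀ hs.ne', one_smul]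
    abel
  rw [hvb]
  exact hΩ (hball hb) hp hs.le ht₀ (by ring)

theorem Finset.sum_le_mul_card_sub {G : Type*} [AddCommGroup G] [DecidableEq G] {S Q : Finset G}
    {f : G → ℝ} {K : ℝ} (hf : ∀ x, 0 ≤ f x) (hQ : Q.Nonempty)
    (hK : ∀ y ∈ S - Q, ∑ q ∈ Q, f (y + q) ≤ K * #Q) : ∑ x ∈ S, f x ≤ K * #(S - Q) := by
  refine le_of_mul_le_mul_right ?_ (Nat.cast_pos.2 hQ.card_pos)
  calc (∑ x ∈ S, f x) * #Q = ∑ q ∈ Q, ∑ x ∈ S, f (x - q + q) := by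
        simp [sum_const, mul_comm]
    _ = ∑ q ∈ Q, ∑ y ∈ S.image (· - q), f (y + q) := by
        refine sum_congr rfl fun q _ => (sum_image (f := fun y => f (y + q)) ?_).symm
        exact fun _ _ _ _ h => sub_left_injective h
    _ ≤ ∑ q ∈ Q, ∑ y ∈ S - Q, f (y + q) := by
        refine sum_le_sum fun q hq => sum_le_sum_of_subset_of_nonneg ?_ fun _ _ _ => hf _
        exact image_subset_iff.2 fun x hx => sub_mem_sub hx hq
    _ = ∑ y ∈ S - Q, ∑ q ∈ Q, f (y + q) := sum_comm
    _ ≤ ∑ _y ∈ S - Q, K * #Q := sum_le_sum hK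
    _ = K * #(S - Q) * #Q := by rw [sum_const, nsmul_eq_mul]; ring

variable {ι : Type*} [Fintype ι] [DecidableEq ι]

noncomputable def latticeBox (c : ι → ℝ) (r : ℝ) : Finset (ι → ℤ) :=
  Fintype.piFinset fun i => Icc ⌈c i - r⌉ ⌊c i + r⌋

theorem mem_latticeBox {c : ι → ℝ} {r : ℝ} {x : ι → ℤ} :
    x ∈ latticeBox c r ↔ ∀ i, |(x i : ℝ) - c i| ≤ r := by
  simp only [latticeBox, Fintype.mem_piFinset, mem_Icc, Int.ceil_le, Int.le_floor, abs_le]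
  refine forall_congr' fun i => ?_
  constructor <;> rintro ⟨h₁, h₂⟩ <;> constructor <;> linarith

theorem coe_latticeBox (c : ι → ℝ) (r : ℝ) :
    (latticeBox c r : Set (ι → ℤ)) = {x | ∀ i, |(x i : ℝ) - c i| ≤ r} :=
  Set.ext fun _ => mem_latticeBox

theorem card_latticeBox_le (c : ι → ℝ) {r : ℝ} (hr : 0 ≤ r) :
    (#(latticeBox c r) : ℝ) ≤ (2 * r + 1) ^ Fintype.card ι := by
  rw [latticeBox, Fintype.card_piFinset, Nat.cast_prod, ← Finset.card_univ, ← prod_const]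
  refine prod_le_prod (fun _ _ => Nat.cast_nonneg _) fun i _ => ?_
  rw [Int.card_Icc, ← Int.cast_natCast, Int.toNat_eq_max, Int.cast_max]
  push_cast
  refine max_le ?_ (by linarith)
  linarith [Int.floor_le (c i + r), Int.le_ceil (c i - r)]

theorem latticeBox_intCast (y : ι → ℤ) (r : ℝ) :
    latticeBox (fun i => (y i : ℝ)) r = (latticeBox 0 r).map (Equiv.addLeft y).toEmbedding := by
  ext x
  simp [mem_latticeBox, neg_add_eq_sub]

omit [DecidableEq ι] in
theorem dist_le_card_mul_of_abs_sub_le {x y : EuclideanSpace ℝ ι} {r : ℝ}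
    (h : ∀ i, |x i - y i| ≤ r) : dist x y ≤ Fintype.card ι * r := by
  rcases isEmpty_or_nonempty ι with hι | ⟨⟨i₀⟩⟩
  · simp [Subsingleton.elim x y]
  have hr : 0 ≤ r := (abs_nonneg _).trans (h i₀)
  have hn : (Fintype.card ι : ℝ) ≤ (Fintype.card ι : ℝ) ^ 2 := by
    exact_mod_cast Nat.le_self_pow two_ne_zero _
  rw [EuclideanSpace.dist_eq, Real.sqrt_le_left (by positivity)]
  calc ∑ i, dist (x i) (y i) ^ 2 ≤ ∑ _i : ι, r ^ 2 :=
        sum_le_sum fun i _ => pow_le_pow_left₀ dist_nonneg (h i) 2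
    _ = Fintype.card ι * r ^ 2 := by simp
    _ ≤ (Fintype.card ι * r) ^ 2 := by rw [mul_pow]; gcongr

noncomputable def roundHomothety (x₀ : ι → ℝ) (t : ℝ) (y : ι → ℤ) : ι → ℤ :=
  fun i => round (x₀ i + t * (y i - x₀ i))

theorem card_filter_roundHomothety_eq_le (x₀ : ι → ℝ) {t : ℝ} (ht : 0 < t) (s : Finset (ι → ℤ))
    (w : ι → ℤ) :
    (#{y ∈ s | roundHomothety x₀ t y = w} : ℝ) ≤ (1 / t + 1) ^ Fintype.card ι := by
  have hsub : {y ∈ s | roundHomothety x₀ t y = w} ⊆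
      latticeBox (fun i => x₀ i + (w i - x₀ i) / t) (1 / (2 * t)) := by
    intro y hy
    rw [mem_filter] at hy
    rw [mem_latticeBox]
    intro i
    have hround := abs_sub_round (x₀ i + t * (y i - x₀ i))
    rw [show round (x₀ i + t * (y i - x₀ i)) = w i from congrFun hy.2 i] at hround
    calc |(y i : ℝ) - (x₀ i + (w i - x₀ i) / t)| = |x₀ i + t * (y i - x₀ i) - w i| / t := by
          rw [← abs_of_pos ht, ← abs_div, abs_of_pos ht]
          congr 1
          field_simp
          ring
      _ ≤ 1 / 2 / t := by gcongr
      _ = 1 / (2 * t) := by ring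
  calc (#{y ∈ s | roundHomothety x₀ t y = w} : ℝ)
      ≤ #(latticeBox (fun i => x₀ i + (w i - x₀ i) / t) (1 / (2 * t))) := by
        exact_mod_cast card_le_card hsub
    _ ≤ (2 * (1 / (2 * t)) + 1) ^ Fintype.card ι := card_latticeBox_le _ (by positivity)
    _ = (1 / t + 1) ^ Fintype.card ι := by field_simp

theorem toLp_roundHomothety_sub_mem {Ω : Set (EuclideanSpace ℝ ι)} (hΩ : Convex ℝ Ω)
    {x₀ : ι → ℝ} {ρ t : ℝ} (hball : ball (WithLp.toLp 2 x₀) ρ ⊆ Ω) (ht₀ : 0 ≤ t) (ht₁ : t < 1)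
    (hρ : Fintype.card ι * (1 / 2 + t * ρ) < (1 - t) * ρ) {p q : ι → ℤ}
    (hp : WithLp.toLp 2 (fun i => (p i : ℝ)) ∈ Ω) (hq : q ∈ latticeBox 0 ρ) :
    WithLp.toLp 2 (fun i => (roundHomothety x₀ t (p - q) i : ℝ)) ∈ Ω := by
  refine hΩ.mem_of_dist_combo_lt hball hp ht₀ ht₁
    ((dist_le_card_mul_of_abs_sub_le fun i => ?_).trans_lt hρ)
  have hqi : |(q i : ℝ)| ≤ ρ := by simpa using mem_latticeBox.1 hq i
  set a := x₀ i + t * ((p - q) i - x₀ i)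
  have ha : a - ((1 - t) * x₀ i + t * p i) = -(t * q i) := by
    simp only [a, Pi.sub_apply]; push_cast; ring
  simp only [PiLp.add_apply, PiLp.smul_apply, smul_eq_mul, roundHomothety]
  calc |(round a : ℝ) - ((1 - t) * x₀ i + t * p i)| = |(round a - a) + -(t * q i)| := by
        rw [← ha]; ring_nf
    _ ≤ |(round a : ℝ) - a| + |t * q i| := by rw [← abs_neg (t * q i)]; exact abs_add_le _ _
    _ ≤ 1 / 2 + t * ρ := by
        rw [abs_sub_comm, abs_mul, abs_of_nonneg ht₀]
        gcongr
        exact abs_sub_round a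

theorem card_sub_latticeBox_le {Ω : Set (EuclideanSpace ℝ ι)} (hΩ : Convex ℝ Ω) {x₀ : ι → ℝ}
    {ρ : ℝ} (hball : ball (WithLp.toLp 2 x₀) ρ ⊆ Ω) (hρ : (Fintype.card ι : ℝ) < ρ)
    {S : Finset (ι → ℤ)} (hS : ∀ x, x ∈ S ↔ WithLp.toLp 2 (fun i => (x i : ℝ)) ∈ Ω) :
    (#(S - latticeBox 0 ρ) : ℝ) ≤ (2 * Fintype.card ι + 3) ^ Fintype.card ι * #S := by
  set n : ℝ := (Fintype.card ι : ℝ)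
  have hn : 0 ≤ n := Nat.cast_nonneg _
  set t : ℝ := 1 / (2 * (n + 1))
  have ht : 0 < t := by positivity
  have ht₁ : t < 1 := by rw [div_lt_one (by positivity)]; linarith
  have hρt : n * (1 / 2 + t * ρ) < (1 - t) * ρ := by
    simp only [t]
    field_simp
    nlinarith
  have hmaps : ∀ y ∈ S - latticeBox 0 ρ, roundHomothety x₀ t y ∈ S := by
    intro y hy
    obtain ⟨p, hp, q, hq, rfl⟩ := mem_sub.1 hy
    exact (hS _).2 (toLp_roundHomothety_sub_mem hΩ hball ht.le ht₁ hρt ((hS p).1 hp) hq)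
  have hfiber : ∀ w ∈ S, #{y ∈ S - latticeBox 0 ρ | roundHomothety x₀ t y = w}
      ≤ (2 * Fintype.card ι + 3) ^ Fintype.card ι := by
    intro w _
    have h := card_filter_roundHomothety_eq_le x₀ ht (S - latticeBox 0 ρ) w
    rw [show 1 / t + 1 = 2 * n + 3 by simp only [t]; field_simp; ring] at h
    simp only [n] at h
    exact_mod_cast h
  simp only [n]
  exact_mod_cast card_le_mul_card_image_of_maps_to hmaps _ hfiber

theorem exists_finset_forall_mem_iff_toLp_mem {Ω : Set (EuclideanSpace ℝ ι)}
    (hΩ : Bornology.IsBounded Ω) :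
    ∃ S : Finset (ι → ℤ), ∀ x, x ∈ S ↔ WithLp.toLp 2 (fun i => (x i : ℝ)) ∈ Ω := by
  classical
  obtain ⟨R, hR⟩ := hΩ.subset_closedBall 0
  refine ⟨{x ∈ latticeBox (0 : ι → ℝ) R | WithLp.toLp 2 (fun i => (x i : ℝ)) ∈ Ω}, fun x => ?_⟩
  rw [mem_filter, and_iff_right_iff_imp, mem_latticeBox]
  intro hx i
  simpa using (PiLp.norm_apply_le _ i).trans (mem_closedBall_zero_iff.1 (hR hx))

/-- Covering inequality: if `Ω ⊂ ℝ^D` is a convex body containing a ball of radius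
`ρ > C_D`, and `f : ℤ^D → ℝ≥0`, then the average of `f` over `Ω ∩ ℤ^D` is bounded by a
constant (depending only on `D`) times the supremum over `y ∈ ℝ^D` of the averages of
`f` over the lattice points of the cubes `y + [-ρ, ρ]^D`; the supremum is expressed by
quantifying over any common upper bound `K` for all these cube averages. -/
theorem stmt_12 (D : ℕ) :
    ∃ C : ℝ, 1 < C ∧
      ∀ (f : (Fin D → ℤ) → ℝ) (Ω : Set (EuclideanSpace ℝ (Fin D))) (ρ : ℝ) (K : ℝ),
        (∀ x, 0 ≤ f x) →
        IsOpen Ω → Bornology.IsBounded Ω → Convex ℝ Ω →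
        (∃ x, ball x ρ ⊆ Ω) → C < ρ →
        (∀ y : Fin D → ℝ,
          (∑ᶠ x ∈ {x : Fin D → ℤ | ∀ i, |(x i : ℝ) - y i| ≤ ρ}, f x)
              / ({x : Fin D → ℤ | ∀ i, |(x i : ℝ) - y i| ≤ ρ}).ncard ≤ K) →
        (∑ᶠ x ∈ {x : Fin D → ℤ | WithLp.toLp 2 (fun i => (x i : ℝ)) ∈ Ω}, f x)
            / ({x : Fin D → ℤ | WithLp.toLp 2 (fun i => (x i : ℝ)) ∈ Ω}).ncard
          ≤ C * K := by
  have hC : (1 : ℝ) < 2 * D + 3 := by linarith [(Nat.cast_nonneg D : (0 : ℝ) ≤ D)]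
  refine ⟨(2 * D + 3) ^ (D + 1), one_lt_pow₀ hC D.succ_ne_zero, ?_⟩
  intro f Ω ρ K hf _ hΩb hΩc ⟨x₀, hx₀⟩ hρ hK
  classical
  obtain ⟨S, hS⟩ := exists_finset_forall_mem_iff_toLp_mem hΩb
  have hD : (Fintype.card (Fin D) : ℝ) < ρ := by
    rw [Fintype.card_fin]
    refine lt_of_le_of_lt ?_ hρ
    calc (D : ℝ) ≤ 2 * D + 3 := by linarith
      _ ≤ (2 * D + 3) ^ (D + 1) := le_self_pow₀ hC.le D.succ_ne_zero
  have hbox : (latticeBox (0 : Fin D → ℝ) ρ).Nonempty :=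
    ⟨0, mem_latticeBox.2 fun i => by simpa using ((Nat.cast_nonneg _).trans_lt hD).le⟩
  have hcube (y : Fin D → ℤ) :
      ∑ q ∈ latticeBox 0 ρ, f (y + q) ≤ K * #(latticeBox (0 : Fin D → ℝ) ρ) := by
    have h := hK fun i => y i
    rw [← coe_latticeBox, finsum_mem_coe_finset, Set.ncard_coe_finset, latticeBox_intCast,
      sum_map, card_map, div_le_iff₀ (Nat.cast_pos.2 hbox.card_pos)] at h
    exact h
  have hK₀ : 0 ≤ K :=
    nonneg_of_mul_nonneg_left ((sum_nonneg fun _ _ => hf _).trans (hcube 0))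
      (Nat.cast_pos.2 hbox.card_pos)
  rw [show {x : Fin D → ℤ | WithLp.toLp 2 (fun i => (x i : ℝ)) ∈ Ω} = S from
      Set.ext fun x => (hS x).symm, finsum_mem_coe_finset, Set.ncard_coe_finset]
  refine div_le_of_le_mul₀ (Nat.cast_nonneg _) (by positivity) ?_
  have hneigh := card_sub_latticeBox_le hΩc (x₀ := x₀.ofLp) (by rwa [WithLp.toLp_ofLp]) hD hS
  rw [Fintype.card_fin] at hneigh
  calc ∑ x ∈ S, f x ≤ K * #(S - latticeBox 0 ρ) :=
        sum_le_mul_card_sub hf hbox fun y _ => hcube y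
    _ ≤ K * ((2 * D + 3) ^ D * #S) := by gcongr
    _ ≤ K * ((2 * D + 3) ^ D * #S) * (2 * D + 3) := le_mul_of_one_le_right (by positivity) hC.le
    _ = (2 * D + 3) ^ (D + 1) * K * #S := by ring
end

section
/- (Exponentials of prime reciprocal sums replaced by logarithmic weights.) Let $\mathcal{P}$ be any finite set of primes and let $K \ge 1$ be a real number. Then $\exp\Big(K \sum_{p \in \mathcal{P}} \frac{1}{p}\Big) \le 1 + C_K \sum_{p \in \mathcal{P}} \frac{(\log p)^K}{p}$ for some constant $C_K$ depending only on $K$. -/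
/-!
Induct on the largest prime `q ∈ 𝒫`. Removing it multiplies the left side by
`exp (K / q) ≤ 1 + K e^K / q`, while the remaining primes are all `< q`, so by Mertens' bound
`∑_{p ≤ q} 1/p ≤ log log q + B` their exponential is at most `e^{KB} (log q)^K`; the extra
term `(K e^K / q) e^{KB} (log q)^K` is a constant times the new summand `(log q)^K / q`.
Mertens' bound follows by partial summation from `∑_{p ≤ n} log p / p ≤ log n + log 4`, which
is Legendre's formula for `n!` combined with Chebyshev's bound `θ(n) ≤ n log 4`.
-/

open Nat hiding log
open Finset Real

theorem Nat.div_le_factorization_factorial {p : ℕ} (hp : p.Prime) (n : ℕ) :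
    n / p ≤ (n !).factorization p := by
  rw [factorization_factorial hp (b := Nat.log p n + 2) (by omega)]
  simpa using single_le_sum (f := fun i => n / p ^ i) (fun _ _ => Nat.zero_le _)
    (show 1 ∈ Ico 1 (Nat.log p n + 2) by simp)

theorem sum_primesLE_div_mul_log_le_log_factorial (n : ℕ) :
    ∑ p ∈ primesLE n, ((n / p : ℕ) : ℝ) * log p ≤ log (n ! : ℕ) := by
  have hsupp : primesLE n ⊆ (n !).factorization.support := fun p hp => by
    rw [Nat.support_factorization, mem_primeFactors]
    exact ⟨prime_of_mem_primesLE hp, dvd_factorial (prime_of_mem_primesLE hp).pos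
      (le_of_mem_primesLE hp), factorial_ne_zero n⟩
  rw [log_nat_eq_sum_factorization, Finsupp.sum]
  calc ∑ p ∈ primesLE n, ((n / p : ℕ) : ℝ) * log p
      ≤ ∑ p ∈ primesLE n, ((n !).factorization p : ℝ) * log p := by
        gcongr with p hp
        exact div_le_factorization_factorial (prime_of_mem_primesLE hp) n
    _ ≤ _ := sum_le_sum_of_subset_of_nonneg hsupp fun p _ _ => by positivity

open Chebyshev in
theorem sum_primesLE_log_div_le (n : ℕ) :
    ∑ p ∈ primesLE n, log p / p ≤ log n + log 4 := by
  rcases Nat.eq_zero_or_pos n with rfl | hn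
  · simp [log_nonneg]
  have hn' : (0 : ℝ) < n := by exact_mod_cast hn
  have hfloor (p : ℕ) : (n : ℝ) / p ≤ ((n / p : ℕ) : ℝ) + 1 := by
    simpa [floor_div_eq_div] using (lt_floor_add_one ((n : ℝ) / p)).le
  have hfact : log (n ! : ℕ) ≤ n * log n := by
    rw [← Real.log_pow]
    exact log_le_log (by positivity) (by exact_mod_cast factorial_le_pow n)
  refine le_of_mul_le_mul_left ?_ hn'
  calc (n : ℝ) * ∑ p ∈ primesLE n, log p / p
      = ∑ p ∈ primesLE n, (n : ℝ) / p * log p := by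
        rw [mul_sum]; exact sum_congr rfl fun p _ => by ring
    _ ≤ ∑ p ∈ primesLE n, (((n / p : ℕ) : ℝ) + 1) * log p :=
        sum_le_sum fun p _ => mul_le_mul_of_nonneg_right (hfloor p) (log_natCast_nonneg p)
    _ = ∑ p ∈ primesLE n, ((n / p : ℕ) : ℝ) * log p + θ n := by
        rw [theta_eq_sum_primesLE_log, ← sum_add_distrib]
        exact sum_congr rfl fun p _ => by ring
    _ ≤ n * log n + log 4 * n :=
        add_le_add ((sum_primesLE_div_mul_log_le_log_factorial n).trans hfact)
          (theta_le_log4_mul_x hn'.le)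
    _ = n * (log n + log 4) := by ring

theorem sum_primesLE_succ (f : ℕ → ℝ) (n : ℕ) :
    ∑ p ∈ primesLE (n + 1), f p =
      ∑ p ∈ primesLE n, f p + if (n + 1).Prime then f (n + 1) else 0 := by
  rw [primesLE_succ]
  split_ifs
  · rw [sum_insert (notMem_primesLE n), add_comm]
  · rw [add_zero]

theorem Real.exp_le_one_add_mul_exp (x : ℝ) : exp x ≤ 1 + x * exp x := by
  have h : (1 - x) * exp x ≤ exp (-x) * exp x :=
    mul_le_mul_of_nonneg_right (by linarith [add_one_le_exp (-x)]) (exp_pos x).le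
  rw [← exp_add, neg_add_cancel, exp_zero] at h
  linarith

/-- Partial summation of `∑ 1/p` against the weights `log p / p`; it decreases from `n = 2` on. -/
noncomputable def mertensGap (n : ℕ) : ℝ :=
  ∑ p ∈ primesLE n, (1 : ℝ) / p - (∑ p ∈ primesLE n, log p / p - log 4) / log n - log (log n)

theorem mertensGap_succ_le {n : ℕ} (hn : 2 ≤ n) : mertensGap (n + 1) ≤ mertensGap n := by
  have hn' : (2 : ℝ) ≤ n := by exact_mod_cast hn
  rw [mertensGap, mertensGap]
  set L := log n
  set L' := log ((n + 1 : ℕ) : ℝ)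
  have hL : 0 < L := log_pos (by linarith)
  have hLL' : L ≤ L' := log_le_log (by linarith) (by push_cast; linarith)
  have hL' : 0 < L' := hL.trans_le hLL'
  set A := ∑ p ∈ primesLE n, log p / p
  have hA : A ≤ L + log 4 := sum_primesLE_log_div_le n
  -- a prime `n + 1` adds `1/(n+1)` and `log (n+1)/(n+1)` to the sums, which cancel here
  have hstep : ∑ p ∈ primesLE (n + 1), (1 : ℝ) / p - (∑ p ∈ primesLE (n + 1), log p / p) / L'
      = ∑ p ∈ primesLE n, (1 : ℝ) / p - A / L' := by
    rw [sum_primesLE_succ, sum_primesLE_succ]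
    split_ifs
    · field_simp; ring
    · simp [A]
  have hweight : 0 ≤ 1 / L - 1 / L' := sub_nonneg.2 (one_div_le_one_div_of_le hL hLL')
  have hloglog : 1 - L / L' ≤ log L' - log L := by
    rw [← log_div hL'.ne' hL.ne']
    simpa using one_sub_inv_le_log_of_pos (div_pos hL' hL)
  have hsplit : L * (1 / L - 1 / L') = 1 - L / L' := by field_simp
  have hA' := mul_le_mul_of_nonneg_right hA hweight
  linear_combination hstep + hA' + hloglog + hsplit

theorem mertensGap_le {n : ℕ} (hn : 2 ≤ n) : mertensGap n ≤ mertensGap 2 := by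
  induction n, hn using Nat.le_induction with
  | base => rfl
  | succ n hn ih => exact (mertensGap_succ_le hn).trans ih

theorem sum_primesLE_inv_le_log_log_add {n : ℕ} (hn : 2 ≤ n) :
    ∑ p ∈ primesLE n, (1 : ℝ) / p ≤ log (log n) + (1 + mertensGap 2) := by
  have hL : 0 < log n := log_pos (by exact_mod_cast hn)
  have hA : (∑ p ∈ primesLE n, log p / p - log 4) / log n ≤ 1 :=
    (div_le_one hL).2 (by linarith [sum_primesLE_log_div_le n])
  have := mertensGap_le hn
  rw [mertensGap] at this
  linarith

theorem exp_mul_sum_inv_le_rpow_log {K B : ℝ} (hK : 0 ≤ K)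
    (hB : ∀ n : ℕ, 2 ≤ n → ∑ p ∈ primesLE n, (1 : ℝ) / p ≤ log (log n) + B)
    {s : Finset ℕ} {q : ℕ} (hq : 2 ≤ q) (hs : s ⊆ primesLE q) :
    exp (K * ∑ p ∈ s, (1 : ℝ) / p) ≤ exp (K * B) * log q ^ K := by
  have hlog : 0 < log q := log_pos (by exact_mod_cast hq)
  calc exp (K * ∑ p ∈ s, (1 : ℝ) / p)
      ≤ exp (K * (log (log q) + B)) := by
        gcongr
        exact (sum_le_sum_of_subset_of_nonneg hs fun p _ _ => by positivity).trans (hB q hq)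
    _ = exp (K * B) * log q ^ K := by
        rw [rpow_def_of_pos hlog, ← exp_add]; ring_nf

theorem exp_mul_sum_inv_le {K B : ℝ} (hK : 0 ≤ K)
    (hB : ∀ n : ℕ, 2 ≤ n → ∑ p ∈ primesLE n, (1 : ℝ) / p ≤ log (log n) + B)
    (P : Finset ℕ) (hP : ∀ p ∈ P, p.Prime) :
    exp (K * ∑ p ∈ P, (1 : ℝ) / p) ≤
      1 + K * exp (K * (1 + B)) * ∑ p ∈ P, log p ^ K / p := by
  induction P using Finset.induction_on_max with
  | empty => simp
  | insert q s hlt ih =>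
    have hq : q.Prime := hP q (mem_insert_self q s)
    have hs : ∀ p ∈ s, p.Prime := fun p hp => hP p (mem_insert_of_mem hp)
    have hqs : q ∉ s := fun h => (hlt q h).false
    have hq' : (1 : ℝ) ≤ q := by exact_mod_cast hq.one_lt.le
    have hsmall : s ⊆ primesLE q := fun p hp => mem_primesLE.2 ⟨(hlt p hp).le, hs p hp⟩
    have hnew : exp (K * (1 / q)) ≤ 1 + K / q * exp K := by
      calc exp (K * (1 / q)) ≤ 1 + K / q * exp (K / q) := by
            rw [← div_eq_mul_one_div]; exact exp_le_one_add_mul_exp (K / q)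
        _ ≤ 1 + K / q * exp K := by gcongr; exact div_le_self hK hq'
    have hold := exp_mul_sum_inv_le_rpow_log hK hB hq.two_le hsmall
    rw [sum_insert hqs, sum_insert hqs, mul_add, exp_add]
    calc exp (K * (1 / q)) * exp (K * ∑ p ∈ s, (1 : ℝ) / p)
        ≤ (1 + K / q * exp K) * exp (K * ∑ p ∈ s, (1 : ℝ) / p) := by gcongr
      _ ≤ (1 + K * exp (K * (1 + B)) * ∑ p ∈ s, log p ^ K / p)
            + K / q * exp K * (exp (K * B) * log q ^ K) := by
          rw [add_mul, one_mul]
          gcongr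
          exact ih hs
      _ = 1 + K * exp (K * (1 + B)) * (log q ^ K / q + ∑ p ∈ s, log p ^ K / p) := by
          rw [mul_add K, exp_add, mul_one]; ring

/-- Exponentials of prime reciprocal sums can be replaced by logarithmic weights: for
any real `K ≥ 1` there is a constant `C_K` such that for every finite set `𝒫` of primes,
`exp(K ∑_{p ∈ 𝒫} 1/p) ≤ 1 + C_K ∑_{p ∈ 𝒫} (log p)^K / p`. -/
theorem stmt_17 (K : ℝ) (hK : 1 ≤ K) :
    ∃ C : ℝ, 0 < C ∧
      ∀ P : Finset ℕ, (∀ p ∈ P, p.Prime) →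
        Real.exp (K * ∑ p ∈ P, (1 : ℝ) / p)
          ≤ 1 + C * ∑ p ∈ P, (Real.log p) ^ K / p := by
  have hK0 : 0 < K := by linarith
  exact ⟨K * exp (K * (1 + (1 + mertensGap 2))), by positivity,
    exp_mul_sum_inv_le hK0.le fun _ hn => sum_primesLE_inv_le_log_log_add hn⟩
end
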